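/- Let σ > 0, ρ ∈ [0,1], P, N > 0. Let (S₁,S₂) be a zero-mean jointly Gaussian pair with variances σ² and correlation ρ (S₁ = σX, S₂ = σ(ρX+√(1−ρ²)W), X, W independent standard Gaussians), and let Z be an independent Gaussian random variable of mean 0 and variance N. Define Y = (√P/σ)·(S₁ + S₂) + Z. Then the minimum over a ∈ ℝ of E[(S₁ − aY)²] equals σ²·(P(1−ρ²) + N)/(2P(1+ρ) + N). (Symmetric uncoded transmission distortion, Corollary 2.) -/

import Mathlib

open MeasureTheory ProbabilityTheory

section Aux
open Real Filter

-- basic real integrals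
lemma myInt_e : Integrable (fun x : ℝ => Real.exp (-x^2/2)) := by
  have := integrable_exp_neg_mul_sq (b := (1:ℝ)/2) (by norm_num)
  convert this using 2 with x
  ring_nf

lemma myInt_e4 : Integrable (fun x : ℝ => Real.exp (-x^2/4)) := by
  have := integrable_exp_neg_mul_sq (b := (1:ℝ)/4) (by norm_num)
  convert this using 2 with x
  ring_nf

lemma myInt_xe : Integrable (fun x : ℝ => x * Real.exp (-x^2/2)) := by
  have := integrable_mul_exp_neg_mul_sq (b := (1:ℝ)/2) (by norm_num)
  convert this using 2 with x
  ring_nf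

lemma myInt_x2e : Integrable (fun x : ℝ => x^2 * Real.exp (-x^2/2)) := by
  apply Integrable.mono' (myInt_e4.const_mul 4)
  · exact (continuous_pow 2).mul (by continuity) |>.aestronglyMeasurable
  · filter_upwards with x
    have h1 : x^2 ≤ 4 * Real.exp (x^2/4) := by
      have := Real.add_one_le_exp (x^2/4)
      nlinarith [Real.exp_pos (x^2/4)]
    have h2 : (0:ℝ) < Real.exp (-x^2/2) := Real.exp_pos _
    rw [Real.norm_eq_abs, abs_of_nonneg (by positivity)]
    calc x^2 * Real.exp (-x^2/2) ≤ 4 * Real.exp (x^2/4) * Real.exp (-x^2/2) := by nlinarith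
    _ = 4 * Real.exp (-x^2/4) := by rw [mul_assoc, ← Real.exp_add]; ring_nf

lemma tend_sq_atTop : Tendsto (fun x : ℝ => x^2) atTop atTop :=
  tendsto_pow_atTop two_ne_zero

lemma tend_sq_atBot : Tendsto (fun x : ℝ => x^2) atBot atTop := by
  have : (fun x : ℝ => x^2) = (fun x : ℝ => x^2) ∘ (fun x : ℝ => -x) := by
    ext x; simp [Function.comp]
  rw [this]
  exact tend_sq_atTop.comp tendsto_neg_atBot_atTop

lemma tend_e {l : Filter ℝ} (h : Tendsto (fun x : ℝ => x^2) l atTop) :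
    Tendsto (fun x : ℝ => -Real.exp (-x^2/2)) l (nhds 0) := by
  rw [show (0:ℝ) = -0 by simp]
  apply Tendsto.neg
  apply Real.tendsto_exp_atBot.comp
  have h2 : Tendsto (fun x : ℝ => (-(1:ℝ)/2) * x^2) l atBot := h.const_mul_atTop_of_neg (by norm_num)
  exact h2.congr (fun x => by ring)

lemma tend_xe {l : Filter ℝ} (h : Tendsto (fun x : ℝ => x^2) l atTop) :
    Tendsto (fun x : ℝ => -(x * Real.exp (-x^2/2))) l (nhds 0) := by
  rw [show (0:ℝ) = -0 by simp]
  apply Tendsto.neg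
  apply squeeze_zero_norm (a := fun x : ℝ => 2 * Real.exp (-x^2/4))
  · intro x
    rw [Real.norm_eq_abs, abs_mul, abs_of_nonneg (Real.exp_pos _).le]
    have h1 : |x| ≤ 2 * Real.exp (x^2/4) := by
      have := Real.add_one_le_exp (x^2/4)
      have h2 := abs_nonneg x
      nlinarith [sq_abs x, sq_nonneg (|x| - 1)]
    have h2 : (0:ℝ) < Real.exp (-x^2/2) := Real.exp_pos _
    calc |x| * Real.exp (-x^2/2) ≤ 2 * Real.exp (x^2/4) * Real.exp (-x^2/2) := by nlinarith
    _ = 2 * Real.exp (-x^2/4) := by rw [mul_assoc, ← Real.exp_add]; ring_nf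
  · rw [show (0:ℝ) = 2 * 0 by simp]
    apply Tendsto.const_mul
    apply Real.tendsto_exp_atBot.comp
    have h2 : Tendsto (fun x : ℝ => (-(1:ℝ)/4) * x^2) l atBot := h.const_mul_atTop_of_neg (by norm_num)
    exact h2.congr (fun x => by ring)

lemma deriv_inner (x : ℝ) : HasDerivAt (fun x : ℝ => -x^2/2) (-x) x := by
  have h := ((hasDerivAt_pow 2 x).neg).div_const 2
  refine HasDerivAt.congr_deriv h ?_
  push_cast
  ring

lemma deriv_e (x : ℝ) : HasDerivAt (fun x : ℝ => -Real.exp (-x^2/2)) (x * Real.exp (-x^2/2)) x := by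
  have h := ((Real.hasDerivAt_exp (-x^2/2)).comp x (deriv_inner x)).neg
  refine HasDerivAt.congr_deriv h ?_
  ring

lemma deriv_xe (x : ℝ) : HasDerivAt (fun x : ℝ => -(x * Real.exp (-x^2/2)))
    ((x^2 - 1) * Real.exp (-x^2/2)) x := by
  have h := ((hasDerivAt_id x).mul ((Real.hasDerivAt_exp (-x^2/2)).comp x (deriv_inner x))).neg
  refine HasDerivAt.congr_deriv h ?_
  simp [Function.comp]
  ring

lemma val_xe : ∫ x : ℝ, x * Real.exp (-x^2/2) = 0 := by
  have h := integral_of_hasDerivAt_of_tendsto deriv_e myInt_xe (tend_e tend_sq_atBot) (tend_e tend_sq_atTop)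
  simpa using h

lemma val_e : ∫ x : ℝ, Real.exp (-x^2/2) = Real.sqrt (2 * Real.pi) := by
  have := integral_gaussian ((1:ℝ)/2)
  rw [show Real.pi / (1/2) = 2 * Real.pi by ring] at this
  rw [← this]
  congr 1 with x
  ring_nf


lemma myInt_sub : Integrable (fun x : ℝ => (x^2 - 1) * Real.exp (-x^2/2)) := by
  have := myInt_x2e.sub myInt_e
  exact this.congr (Filter.Eventually.of_forall fun x => by simp [Pi.sub_apply]; ring)

lemma val_x2e : ∫ x : ℝ, x^2 * Real.exp (-x^2/2) = Real.sqrt (2 * Real.pi) := by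
  have h := integral_of_hasDerivAt_of_tendsto deriv_xe myInt_sub (tend_xe tend_sq_atBot) (tend_xe tend_sq_atTop)
  have h2 : ∫ x : ℝ, ((x^2 - 1) * Real.exp (-x^2/2)) = (∫ x : ℝ, x^2 * Real.exp (-x^2/2)) - ∫ x : ℝ, Real.exp (-x^2/2) := by
    rw [← integral_sub myInt_x2e myInt_e]
    congr 1 with x
    ring
  rw [h2] at h
  have := val_e
  linarith [h, this]

lemma pdf01 (x : ℝ) : gaussianPDFReal 0 1 x = (Real.sqrt (2 * Real.pi))⁻¹ * Real.exp (-x^2/2) := by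
  simp [gaussianPDFReal]

lemma gauss_integral (f : ℝ → ℝ) :
    ∫ x, f x ∂(gaussianReal 0 1) = ∫ x, gaussianPDFReal 0 1 x * f x := by
  rw [gaussianReal_of_var_ne_zero _ one_ne_zero, gaussianPDF_def]
  rw [show (fun x => ENNReal.ofReal (gaussianPDFReal 0 1 x))
      = fun x => ((Real.toNNReal (gaussianPDFReal 0 1 x) : NNReal) : ENNReal) from rfl]
  rw [integral_withDensity_eq_integral_smul ((measurable_gaussianPDFReal 0 1).real_toNNReal) f]
  congr 1 with x
  simp [NNReal.smul_def, Real.coe_toNNReal _ (gaussianPDFReal_nonneg 0 1 x)]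

lemma gauss_integrable_iff (f : ℝ → ℝ) :
    Integrable f (gaussianReal 0 1) ↔ Integrable (fun x => gaussianPDFReal 0 1 x * f x) := by
  rw [gaussianReal_of_var_ne_zero _ one_ne_zero, gaussianPDF_def]
  rw [show (fun x => ENNReal.ofReal (gaussianPDFReal 0 1 x))
      = fun x => ((Real.toNNReal (gaussianPDFReal 0 1 x) : NNReal) : ENNReal) from rfl]
  rw [integrable_withDensity_iff_integrable_coe_smul ((measurable_gaussianPDFReal 0 1).real_toNNReal)]
  constructor <;> intro h <;> apply h.congr <;> filter_upwards with x <;>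
    simp [Real.coe_toNNReal _ (gaussianPDFReal_nonneg 0 1 x)]

lemma gauss_int_sq : Integrable (fun x : ℝ => x^2) (gaussianReal 0 1) := by
  rw [gauss_integrable_iff]
  apply Integrable.congr ((myInt_x2e).const_mul (Real.sqrt (2 * Real.pi))⁻¹)
  filter_upwards with x
  rw [pdf01]
  ring

lemma gauss_memL2 : MemLp (id : ℝ → ℝ) 2 (gaussianReal 0 1) := by
  rw [memLp_two_iff_integrable_sq aestronglyMeasurable_id]
  exact gauss_int_sq

lemma gauss_mean : ∫ x, x ∂(gaussianReal 0 1) = 0 := by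
  rw [gauss_integral]
  have : ∫ x, gaussianPDFReal 0 1 x * x = (Real.sqrt (2 * Real.pi))⁻¹ * ∫ x, x * Real.exp (-x^2/2) := by
    rw [← integral_const_mul]
    congr 1 with x
    rw [pdf01]; ring
  rw [this, val_xe, mul_zero]

lemma gauss_msq : ∫ x, x^2 ∂(gaussianReal 0 1) = 1 := by
  rw [gauss_integral]
  have : ∫ x, gaussianPDFReal 0 1 x * x^2 = (Real.sqrt (2 * Real.pi))⁻¹ * ∫ x, x^2 * Real.exp (-x^2/2) := by
    rw [← integral_const_mul]
    congr 1 with x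
    rw [pdf01]; ring
  rw [this, val_x2e]
  rw [inv_mul_cancel₀]
  positivity

section Main
variable {Ω : Type*} [MeasurableSpace Ω] {μ : Measure Ω} [IsProbabilityMeasure μ]

lemma moments {U : Ω → ℝ} (hU : μ.map U = gaussianReal 0 1) :
    MemLp U 2 μ ∧ (∫ ω, U ω ∂μ) = 0 ∧ (∫ ω, (U ω)^2 ∂μ) = 1 := by
  have hUm : AEMeasurable U μ := aemeasurable_of_map_neZero (by rw [hU]; infer_instance)
  have h2 : MemLp U 2 μ := by
    have h : MemLp (id : ℝ → ℝ) 2 (μ.map U) := by rw [hU]; exact gauss_memL2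
    exact (memLp_map_measure_iff aestronglyMeasurable_id hUm).mp h
  refine ⟨h2, ?_, ?_⟩
  · have h := integral_map hUm (aestronglyMeasurable_id (α := ℝ))
    simp only [id_eq] at h
    rw [hU, gauss_mean] at h
    exact h.symm
  · have h := integral_map (f := fun x : ℝ => x^2) hUm
      ((measurable_id.pow_const 2).aestronglyMeasurable)
    rw [hU, gauss_msq] at h
    exact h.symm

lemma key_integral (X W Z' : Ω → ℝ)
    (hindep : iIndepFun ![X, W, Z'] μ)
    (hX : μ.map X = gaussianReal 0 1)
    (hW : μ.map W = gaussianReal 0 1)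
    (hZ' : μ.map Z' = gaussianReal 0 1)
    (c1 c2 c3 : ℝ) :
    ∫ ω, (c1 * X ω + c2 * W ω + c3 * Z' ω)^2 ∂μ = c1^2 + c2^2 + c3^2 := by
  obtain ⟨hX2, hXmean, hXsq⟩ := moments hX
  obtain ⟨hW2, hWmean, hWsq⟩ := moments hW
  obtain ⟨hZ2, hZmean, hZsq⟩ := moments hZ'
  have hXW : IndepFun X W μ := by
    simpa using hindep.indepFun (show (0 : Fin 3) ≠ 1 by decide)
  have hXZ : IndepFun X Z' μ := by
    simpa using hindep.indepFun (show (0 : Fin 3) ≠ 2 by decide)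
  have hWZ : IndepFun W Z' μ := by
    simpa using hindep.indepFun (show (1 : Fin 3) ≠ 2 by decide)
  have iX1 : Integrable X μ := hX2.integrable one_le_two
  have iW1 : Integrable W μ := hW2.integrable one_le_two
  have iZ1 : Integrable Z' μ := hZ2.integrable one_le_two
  have iX2 : Integrable (fun ω => X ω ^ 2) μ := hX2.integrable_sq
  have iW2 : Integrable (fun ω => W ω ^ 2) μ := hW2.integrable_sq
  have iZ2 : Integrable (fun ω => Z' ω ^ 2) μ := hZ2.integrable_sq
  have iXW : Integrable (fun ω => X ω * W ω) μ := hXW.integrable_mul iX1 iW1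
  have iXZ : Integrable (fun ω => X ω * Z' ω) μ := hXZ.integrable_mul iX1 iZ1
  have iWZ : Integrable (fun ω => W ω * Z' ω) μ := hWZ.integrable_mul iW1 iZ1
  have vXW : ∫ ω, X ω * W ω ∂μ = 0 := by
    have : ∫ ω, X ω * W ω ∂μ = (∫ ω, X ω ∂μ) * ∫ ω, W ω ∂μ :=
      hXW.integral_mul_eq_mul_integral hX2.aestronglyMeasurable hW2.aestronglyMeasurable
    rw [this, hXmean, hWmean, mul_zero]
  have vXZ : ∫ ω, X ω * Z' ω ∂μ = 0 := by
    have : ∫ ω, X ω * Z' ω ∂μ = (∫ ω, X ω ∂μ) * ∫ ω, Z' ω ∂μ :=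
      hXZ.integral_mul_eq_mul_integral hX2.aestronglyMeasurable hZ2.aestronglyMeasurable
    rw [this, hXmean, hZmean, mul_zero]
  have vWZ : ∫ ω, W ω * Z' ω ∂μ = 0 := by
    have : ∫ ω, W ω * Z' ω ∂μ = (∫ ω, W ω ∂μ) * ∫ ω, Z' ω ∂μ :=
      hWZ.integral_mul_eq_mul_integral hW2.aestronglyMeasurable hZ2.aestronglyMeasurable
    rw [this, hWmean, hZmean, mul_zero]
  have hexp : (fun ω => (c1 * X ω + c2 * W ω + c3 * Z' ω)^2)
      = fun ω => (c1^2 * X ω ^ 2 + (c2^2 * W ω ^ 2 + c3^2 * Z' ω ^ 2))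
        + ((2*c1*c2) * (X ω * W ω) + ((2*c1*c3) * (X ω * Z' ω) + (2*c2*c3) * (W ω * Z' ω))) := by
    funext ω; ring
  have J1 : Integrable (fun ω => c2^2 * W ω ^ 2 + c3^2 * Z' ω ^ 2) μ :=
    (iW2.const_mul _).add (iZ2.const_mul _)
  have J2 : Integrable (fun ω => c1^2 * X ω ^ 2 + (c2^2 * W ω ^ 2 + c3^2 * Z' ω ^ 2)) μ :=
    (iX2.const_mul _).add J1
  have J3 : Integrable (fun ω => (2*c1*c3) * (X ω * Z' ω) + (2*c2*c3) * (W ω * Z' ω)) μ :=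
    (iXZ.const_mul _).add (iWZ.const_mul _)
  have J4 : Integrable (fun ω => (2*c1*c2) * (X ω * W ω)
      + ((2*c1*c3) * (X ω * Z' ω) + (2*c2*c3) * (W ω * Z' ω))) μ :=
    (iXW.const_mul _).add J3
  rw [hexp, integral_add J2 J4, integral_add (iX2.const_mul _) J1,
    integral_add (iW2.const_mul _) (iZ2.const_mul _),
    integral_add (iXW.const_mul _) J3,
    integral_add (iXZ.const_mul _) (iWZ.const_mul _)]
  rw [integral_const_mul, integral_const_mul, integral_const_mul, integral_const_mul,
    integral_const_mul, integral_const_mul, hXsq, hWsq, hZsq, vXW, vXZ, vWZ]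
  ring

end Main


end Aux

/-- Symmetric uncoded transmission distortion (Corollary 2): for
`Y = (√P/σ)(S₁ + S₂) + Z`, the minimum over `a ∈ ℝ` of `E[(S₁ − aY)²]` is attained and
equals `σ²(P(1−ρ²) + N)/(2P(1+ρ) + N)`. -/
theorem symmetric_uncoded_transmission_distortion
    {Ω : Type*} [MeasurableSpace Ω] (μ : Measure Ω) [IsProbabilityMeasure μ]
    (σ ρ P N : ℝ) (hσ : 0 < σ) (hρ : ρ ∈ Set.Icc (0:ℝ) 1)
    (hP : 0 < P) (hN : 0 < N)
    (X W Z' : Ω → ℝ)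
    (hindep : iIndepFun
      ![X, W, Z'] μ)
    (hX : μ.map X = gaussianReal 0 1)
    (hW : μ.map W = gaussianReal 0 1)
    (hZ' : μ.map Z' = gaussianReal 0 1)
    (S₁ S₂ Z Y : Ω → ℝ)
    (hS₁ : S₁ = fun ω => σ * X ω)
    (hS₂ : S₂ = fun ω => σ * (ρ * X ω + Real.sqrt (1 - ρ ^ 2) * W ω))
    (hZ : Z = fun ω => Real.sqrt N * Z' ω)
    (hY : Y = fun ω => (Real.sqrt P / σ) * (S₁ ω + S₂ ω) + Z ω) :
    IsLeast {d : ℝ | ∃ a : ℝ, d = ∫ ω, (S₁ ω - a * Y ω) ^ 2 ∂μ}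
      (σ ^ 2 * (P * (1 - ρ ^ 2) + N) / (2 * P * (1 + ρ) + N)) := by

  obtain ⟨hρ0, hρ1⟩ := hρ
  set s := Real.sqrt P with hs_def
  set r := Real.sqrt (1 - ρ^2) with hr_def
  set n := Real.sqrt N with hn_def
  have hs : s^2 = P := Real.sq_sqrt hP.le
  have hr : r^2 = 1 - ρ^2 := Real.sq_sqrt (by nlinarith)
  have hn : n^2 = N := Real.sq_sqrt hN.le
  have hC : 0 < 2 * P * (1 + ρ) + N := by nlinarith
  -- value of the quadratic
  have key : ∀ a : ℝ, ∫ ω, (S₁ ω - a * Y ω) ^ 2 ∂μ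
      = σ^2 - 2*a*(σ*s*(1+ρ)) + a^2*(2*P*(1+ρ)+N) := by
    intro a
    have hk := key_integral X W Z' hindep hX hW hZ'
      (σ - a*(s*(1+ρ))) (-(a*(s*r))) (-(a*n))
    have heq : (fun ω => (S₁ ω - a * Y ω) ^ 2)
        = fun ω => ((σ - a*(s*(1+ρ))) * X ω + (-(a*(s*r))) * W ω + (-(a*n)) * Z' ω)^2 := by
      funext ω
      simp only [hS₁, hS₂, hZ, hY]
      have hσ' : σ ≠ 0 := hσ.ne'
      field_simp
      ring
    rw [heq, hk]
    linear_combination (a^2*(1+ρ)^2 + a^2*(1-ρ^2))*hs + (a^2*s^2)*hr + a^2*hn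
  constructor
  · refine ⟨σ*s*(1+ρ)/(2*P*(1+ρ)+N), ?_⟩
    rw [key]
    have hCne : 2*P*(1+ρ)+N ≠ 0 := hC.ne'
    have e : σ^2 - 2*(σ*s*(1+ρ)/(2*P*(1+ρ)+N))*(σ*s*(1+ρ))
        + (σ*s*(1+ρ)/(2*P*(1+ρ)+N))^2*(2*P*(1+ρ)+N)
        = (σ^2*(2*P*(1+ρ)+N) - (σ*s*(1+ρ))^2)/(2*P*(1+ρ)+N) := by
      field_simp
      ring
    rw [e, div_eq_div_iff hCne hCne]
    linear_combination (σ^2*(1+ρ)^2*(2*P*(1+ρ)+N))*hs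
  · rintro d ⟨a, rfl⟩
    rw [key, div_le_iff₀ hC]
    have hs' : σ^2*(1+ρ)^2*s^2 = σ^2*(1+ρ)^2*P := by rw [hs]
    nlinarith [sq_nonneg (a*(2*P*(1+ρ)+N) - σ*s*(1+ρ)), hs']
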